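/- Let $(\mathcal{A},[~,~])$ be a mock-Lie algebra and $r\in\mathcal{A}\otimes\mathcal{A}$ antisymmetric. If $(\mathcal{A},[~,~],r,\Delta_r)$ is a quasitriangular mock-Lie bialgebra (i.e. $r$ solves the classical mock-Lie Yang-Baxter equation), then $(\mathcal{A},\Delta_r,r)$ is a cosymplectic mock-Lie coalgebra, i.e. $r^1{}_{(1)}\otimes r^1{}_{(2)}\otimes r^2 + r^2\otimes r^1{}_{(1)}\otimes r^1{}_{(2)} + r^1{}_{(2)}\otimes r^2\otimes r^1{}_{(1)} = 0$, where $\Delta_r(x)=x_{(1)}\otimes x_{(2)}$. -/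

import Mathlib

open TensorProduct LinearMap

/-- `Δ_r(x) = [x,r¹]⊗r² - r¹⊗[x,r²]` for `r = ∑ i, r1 i ⊗ r2 i`. -/
noncomputable def DeltaR {K A ι : Type*} [Field K] [AddCommGroup A] [Module K A]
    [Fintype ι] (b : A →ₗ[K] A →ₗ[K] A) (r1 r2 : ι → A) (x : A) : A ⊗[K] A :=
  ∑ i, (b x (r1 i)) ⊗ₜ[K] r2 i - ∑ i, r1 i ⊗ₜ[K] (b x (r2 i))

/-- If `r` is an antisymmetric solution of the classical mock-Lie Yang-Baxter equation,
then `(A, Δ_r, r)` is a cosymplectic mock-Lie coalgebra: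
`r¹₍₁₎⊗r¹₍₂₎⊗r² + r²⊗r¹₍₁₎⊗r¹₍₂₎ + r¹₍₂₎⊗r²⊗r¹₍₁₎ = 0`. -/
theorem stmt10 {K A ι : Type*} [Field K] [CharZero K]
    [AddCommGroup A] [Module K A] [Fintype ι]
    (b : A →ₗ[K] A →ₗ[K] A) (r1 r2 : ι → A)
    (hcomm : ∀ x y : A, b x y = b y x)
    (hjac : ∀ x y z : A, b x (b y z) + b y (b z x) + b z (b x y) = 0)
    (hanti : (TensorProduct.comm K A A) (∑ i, r1 i ⊗ₜ[K] r2 i) =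
      - ∑ i, r1 i ⊗ₜ[K] r2 i)
    (hcybe : ∑ i, ∑ j, (b (r1 i) (r1 j)) ⊗ₜ[K] (r2 i ⊗ₜ[K] r2 j) +
      ∑ i, ∑ j, r1 i ⊗ₜ[K] (r1 j ⊗ₜ[K] (b (r2 i) (r2 j))) -
      ∑ i, ∑ j, r1 i ⊗ₜ[K] ((b (r1 j) (r2 i)) ⊗ₜ[K] r2 j) = 0) :
    (TensorProduct.assoc K A A A) (∑ i, (DeltaR b r1 r2 (r1 i)) ⊗ₜ[K] r2 i) +
      ∑ i, r2 i ⊗ₜ[K] (DeltaR b r1 r2 (r1 i)) +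
      (lTensor A (TensorProduct.comm K A A).toLinearMap)
        ((TensorProduct.leftComm K A A A)
          ((TensorProduct.assoc K A A A)
            (∑ i, (DeltaR b r1 r2 (r1 i)) ⊗ₜ[K] r2 i))) = 0 := by
  classical
  -- antisymmetry in the form usable against any bilinear map
  have key : ∀ (f : A →ₗ[K] A →ₗ[K] (A ⊗[K] (A ⊗[K] A))),
      ∑ i, f (r1 i) (r2 i) = - ∑ i, f (r2 i) (r1 i) := by
    intro f
    have h := congrArg (TensorProduct.lift f) hanti
    simp only [map_sum, map_neg, comm_tmul, lift.tmul] at h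
    rw [eq_comm, neg_eq_iff_eq_neg] at h
    simpa using h
  have sswap : ∀ (f g : ι → ι → A ⊗[K] (A ⊗[K] A)), (∀ x y, f x y = g y x) →
      ∑ x, ∑ y, f x y = ∑ x, ∑ y, g x y := fun f g h => by
    rw [Finset.sum_comm]
    exact Finset.sum_congr rfl fun y _ => Finset.sum_congr rfl fun x _ => h x y
  -- the permuted CYBE: apply u⊗(v⊗w) ↦ w⊗(u⊗v)
  have hcybe' : ∑ i, ∑ j, r2 j ⊗ₜ[K] ((b (r1 i)) (r1 j) ⊗ₜ[K] r2 i) +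
      ∑ i, ∑ j, (b (r2 i)) (r2 j) ⊗ₜ[K] (r1 i ⊗ₜ[K] r1 j) -
      ∑ i, ∑ j, r2 j ⊗ₜ[K] (r1 i ⊗ₜ[K] (b (r1 j)) (r2 i)) = 0 := by
    have h := congrArg (fun t : A ⊗[K] (A ⊗[K] A) =>
      (lTensor A (TensorProduct.comm K A A).toLinearMap)
        ((TensorProduct.leftComm K A A A)
          ((TensorProduct.assoc K A A A)
            ((TensorProduct.comm K A (A ⊗[K] A)) t)))) hcybe
    simpa only [map_sum, map_sub, map_add, map_zero, comm_tmul, assoc_tmul,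
      leftComm_tmul, lTensor_tmul, LinearEquiv.coe_coe] using h
  simp only [DeltaR, sub_tmul, sum_tmul, tmul_sub, tmul_sum, map_sum, map_sub, map_add,
    assoc_tmul, leftComm_tmul, lTensor_tmul, LinearEquiv.coe_coe, comm_tmul,
    Finset.sum_sub_distrib]
  -- name the six double sums and rewrite each
  have hA1 : ∑ x, ∑ y, (b (r1 x)) (r1 y) ⊗ₜ[K] (r2 y ⊗ₜ[K] r2 x)
      = ∑ i, ∑ j, (b (r1 i)) (r1 j) ⊗ₜ[K] (r2 i ⊗ₜ[K] r2 j) :=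
    sswap _ _ fun x y => by rw [hcomm (r1 x) (r1 y)]
  have hA2 : ∑ x, ∑ y, r1 y ⊗ₜ[K] ((b (r1 x)) (r2 y) ⊗ₜ[K] r2 x)
      = ∑ i, ∑ j, r1 i ⊗ₜ[K] ((b (r1 j)) (r2 i) ⊗ₜ[K] r2 j) :=
    sswap _ _ fun x y => rfl
  have hB1 : ∑ x, ∑ y, r2 x ⊗ₜ[K] ((b (r1 x)) (r1 y) ⊗ₜ[K] r2 y)
      = ∑ i, ∑ j, r2 j ⊗ₜ[K] ((b (r1 i)) (r1 j) ⊗ₜ[K] r2 i) :=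
    sswap _ _ fun x y => by rw [hcomm (r1 x) (r1 y)]
  have hB2 : ∑ x, ∑ y, r2 x ⊗ₜ[K] (r1 y ⊗ₜ[K] (b (r1 x)) (r2 y))
      = ∑ i, ∑ j, r2 j ⊗ₜ[K] (r1 i ⊗ₜ[K] (b (r1 j)) (r2 i)) :=
    sswap _ _ fun x y => rfl
  have hC1 : ∑ x, ∑ y, r2 y ⊗ₜ[K] (r2 x ⊗ₜ[K] (b (r1 x)) (r1 y))
      = ∑ i, ∑ j, r1 i ⊗ₜ[K] (r1 j ⊗ₜ[K] (b (r2 i)) (r2 j)) := by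
    have s1 := key (LinearMap.mk₂ K
      (fun a c => ∑ y, r2 y ⊗ₜ[K] (c ⊗ₜ[K] (b a) (r1 y)))
      (by intros; simp [map_add, LinearMap.add_apply, tmul_add, add_tmul,
        Finset.sum_add_distrib])
      (by intros; simp [map_smul, LinearMap.smul_apply, tmul_smul, ← smul_tmul', Finset.smul_sum])
      (by intros; simp [tmul_add, add_tmul, Finset.sum_add_distrib])
      (by intros; simp [tmul_smul, ← smul_tmul', Finset.smul_sum]))
    simp only [LinearMap.mk₂_apply] at s1
    have s2 := key (LinearMap.mk₂ K
      (fun a c => ∑ x, c ⊗ₜ[K] (r1 x ⊗ₜ[K] (b (r2 x)) a))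
      (by intros; simp [map_add, LinearMap.add_apply, tmul_add, add_tmul,
        Finset.sum_add_distrib])
      (by intros; simp [map_smul, LinearMap.smul_apply, tmul_smul, ← smul_tmul', Finset.smul_sum])
      (by intros; simp [tmul_add, add_tmul, Finset.sum_add_distrib])
      (by intros; simp [tmul_smul, ← smul_tmul', Finset.smul_sum]))
    change ∑ i, ∑ x, r2 i ⊗ₜ[K] (r1 x ⊗ₜ[K] (b (r2 x)) (r1 i)) =
      - ∑ i, ∑ x, r1 i ⊗ₜ[K] (r1 x ⊗ₜ[K] (b (r2 x)) (r2 i)) at s2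
    calc ∑ x, ∑ y, r2 y ⊗ₜ[K] (r2 x ⊗ₜ[K] (b (r1 x)) (r1 y))
        = - ∑ x, ∑ y, r2 y ⊗ₜ[K] (r1 x ⊗ₜ[K] (b (r2 x)) (r1 y)) := s1
      _ = - ∑ y, ∑ x, r2 y ⊗ₜ[K] (r1 x ⊗ₜ[K] (b (r2 x)) (r1 y)) := by
          rw [Finset.sum_comm]
      _ = - - ∑ y, ∑ x, r1 y ⊗ₜ[K] (r1 x ⊗ₜ[K] (b (r2 x)) (r2 y)) := by rw [s2]
      _ = ∑ y, ∑ x, r1 y ⊗ₜ[K] (r1 x ⊗ₜ[K] (b (r2 x)) (r2 y)) := neg_neg _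
      _ = ∑ i, ∑ j, r1 i ⊗ₜ[K] (r1 j ⊗ₜ[K] (b (r2 i)) (r2 j)) :=
          Finset.sum_congr rfl fun i _ => Finset.sum_congr rfl fun j _ => by
            rw [hcomm (r2 j) (r2 i)]
  have hC2 : ∑ x, ∑ y, (b (r1 x)) (r2 y) ⊗ₜ[K] (r2 x ⊗ₜ[K] r1 y)
      = - ∑ i, ∑ j, (b (r2 i)) (r2 j) ⊗ₜ[K] (r1 i ⊗ₜ[K] r1 j) := by
    have s1 := key (LinearMap.mk₂ K
      (fun a c => ∑ y, (b a) (r2 y) ⊗ₜ[K] (c ⊗ₜ[K] r1 y))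
      (by intros; simp [map_add, LinearMap.add_apply, tmul_add, add_tmul,
        Finset.sum_add_distrib])
      (by intros; simp [map_smul, LinearMap.smul_apply, tmul_smul, ← smul_tmul', Finset.smul_sum])
      (by intros; simp [tmul_add, add_tmul, Finset.sum_add_distrib])
      (by intros; simp [tmul_smul, ← smul_tmul', Finset.smul_sum]))
    simp only [LinearMap.mk₂_apply] at s1
    exact s1
  rw [hA1, hA2, hB1, hB2, hC1, hC2]
  calc (∑ i, ∑ j, (b (r1 i)) (r1 j) ⊗ₜ[K] (r2 i ⊗ₜ[K] r2 j) -
        ∑ i, ∑ j, r1 i ⊗ₜ[K] ((b (r1 j)) (r2 i) ⊗ₜ[K] r2 j)) +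
      (∑ i, ∑ j, r2 j ⊗ₜ[K] ((b (r1 i)) (r1 j) ⊗ₜ[K] r2 i) -
        ∑ i, ∑ j, r2 j ⊗ₜ[K] (r1 i ⊗ₜ[K] (b (r1 j)) (r2 i))) +
      (∑ i, ∑ j, r1 i ⊗ₜ[K] (r1 j ⊗ₜ[K] (b (r2 i)) (r2 j)) -
        - ∑ i, ∑ j, (b (r2 i)) (r2 j) ⊗ₜ[K] (r1 i ⊗ₜ[K] r1 j))
      = (∑ i, ∑ j, (b (r1 i)) (r1 j) ⊗ₜ[K] (r2 i ⊗ₜ[K] r2 j) +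
          ∑ i, ∑ j, r1 i ⊗ₜ[K] (r1 j ⊗ₜ[K] (b (r2 i)) (r2 j)) -
          ∑ i, ∑ j, r1 i ⊗ₜ[K] ((b (r1 j)) (r2 i) ⊗ₜ[K] r2 j)) +
        (∑ i, ∑ j, r2 j ⊗ₜ[K] ((b (r1 i)) (r1 j) ⊗ₜ[K] r2 i) +
          ∑ i, ∑ j, (b (r2 i)) (r2 j) ⊗ₜ[K] (r1 i ⊗ₜ[K] r1 j) -
          ∑ i, ∑ j, r2 j ⊗ₜ[K] (r1 i ⊗ₜ[K] (b (r1 j)) (r2 i))) := by abel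
    _ = 0 := by rw [hcybe, hcybe', add_zero]
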